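/- Let θ ∈ (0,1), let k, k' : ℤ → ℕ be finitely supported, and let Ṽ : ℤ → ℝ satisfy |Ṽ_n| ≤ 2 for all n ∈ ℤ. Let w(n) = max(1,|n|), let (n_i)_{i≥1} be an arrangement of the finite multiset in which each n ∈ ℤ is repeated k_n + k'_n times, ordered so that w(n₁) ≥ w(n₂) ≥ w(n₃) ≥ …, and set m*(k,k') = max(1, |∑_n (k_n − k'_n)·n|). If |∑_{n∈ℤ} (k_n − k'_n)·(n² + Ṽ_n)| ≤ 1, then ∑_{n∈ℤ} |k_n − k'_n|·w(n)^{θ/2} ≤ 3·8^{θ/2}·( ∑_{i≥3} w(n_i)^θ + m*(k,k')^θ ). -/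

import Mathlib

open scoped BigOperators

/-- `w(n) = max(1, |n|)` as a real number. -/
noncomputable def wR (n : ℤ) : ℝ := max 1 |(n : ℝ)|

/-- The momentum `m(k,k') = ∑ₙ (kₙ - k'ₙ)·n`. -/
def momZ (k k' : ℤ →₀ ℕ) : ℤ :=
  ∑ n ∈ k.support ∪ k'.support, ((k n : ℤ) - (k' n : ℤ)) * n

/-- `m*(k,k') = max(1, |m(k,k')|)` as a real number. -/
noncomputable def mstarR (k k' : ℤ →₀ ℕ) : ℝ := ((max 1 |momZ k k'| : ℤ) : ℝ)

/-!
Split `k - k' = ρ + e`, with `ρ` carried by the first two entries `t` of `L` and `e` by the rest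
`r`: `|ρ n| ≤ count n t` and `|e n| ≤ count n r`. Everything `e` and `V` contribute is bounded by
`S = ∑_{n ∈ r} w(n)²`, so the signed sum `ρ` of at most two points has
`|∑ ρ n · n²| ≤ 5 + 3S` and `|∑ ρ n · n| ≤ m* + 3S`. For a single point this bounds `a²`; for two
points of opposite signs, `|x² - y²| = |x + y| |x - y|` with `|x - y| ≥ 1` bounds `|x + y|`, hence
`|x|`. Thus `w ≤ 8 (S + m*²)` on the support of `ρ`, and subadditivity of `x ↦ x ^ (θ / 2)` turns
`(S + m*²) ^ (θ / 2)` into `∑_{n ∈ r} w(n) ^ θ + m* ^ θ`.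
-/

open Finset

lemma sum_count_mul_eq_sum_map {α R : Type*} [DecidableEq α] [NonAssocSemiring R]
    {s : Finset α} {l : List α} (hl : ∀ n ∈ l, n ∈ s) (f : α → R) :
    ∑ n ∈ s, (l.count n : R) * f n = (l.map f).sum := by
  rw [sum_list_map_count, ← sum_subset (fun n hn => hl n (List.mem_toFinset.mp hn))]
  · simp [nsmul_eq_mul]
  · intro n _ hn
    simp [List.count_eq_zero_of_not_mem (List.mem_toFinset.not.mp hn)]

lemma List.sum_map_nonneg_of_nonneg {α : Type*} (l : List α) {f : α → ℝ} (hf : ∀ x, 0 ≤ f x) :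
    0 ≤ (l.map f).sum :=
  List.sum_nonneg (by simp only [List.mem_map]; rintro _ ⟨x, _, rfl⟩; exact hf x)

lemma sum_abs_mul_le_sum_map {α : Type*} [DecidableEq α] {s : Finset α} {l : List α}
    (hl : ∀ n ∈ l, n ∈ s) {e : α → ℤ} (he : ∀ n, |e n| ≤ l.count n) {g h : α → ℝ}
    (hh : ∀ n, 0 ≤ h n) (hg : ∀ n, e n ≠ 0 → |g n| ≤ h n) :
    ∑ n ∈ s, |(e n : ℝ) * g n| ≤ (l.map h).sum := by
  rw [← sum_count_mul_eq_sum_map hl]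
  refine sum_le_sum fun n _ => ?_
  by_cases h0 : e n = 0
  · simpa [h0] using mul_nonneg (Nat.cast_nonneg _) (hh n)
  · rw [abs_mul, ← Int.cast_abs]
    exact mul_le_mul (by exact_mod_cast he n) (hg n h0) (abs_nonneg _) (Nat.cast_nonneg _)

lemma Int.exists_add_eq_abs_le_abs_le {a b c : ℤ} (h : |a| ≤ b + c) (hb : 0 ≤ b) (hc : 0 ≤ c) :
    ∃ x y, a = x + y ∧ |x| ≤ b ∧ |y| ≤ c :=
  ⟨max (min a b) (-b), a - max (min a b) (-b), by
    rw [abs_le] at h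
    simp only [abs_le, max_def, min_def]
    split_ifs <;> omega⟩

lemma Multiset.count_finset_bind_replicate {α : Type*} [DecidableEq α] (s : Finset α)
    (f : α → ℕ) (a : α) :
    (s.val.bind fun n => Multiset.replicate (f n) n).count a = if a ∈ s then f a else 0 := by
  simp [Multiset.count_bind, Multiset.count_replicate]

lemma rpow_list_sum_le_sum_map_rpow {p : ℝ} (hp : 0 < p) (hp1 : p ≤ 1) {l : List ℝ}
    (hl : ∀ x ∈ l, 0 ≤ x) : l.sum ^ p ≤ (l.map (· ^ p)).sum :=
  List.le_sum_of_subadditive_on_pred (· ^ p) (fun x : ℝ => 0 ≤ x)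
    (by simp [Real.zero_rpow hp.ne']) le_rfl
    (fun _ _ hx hy => Real.rpow_add_le_add_rpow hx hy hp.le hp1) (fun _ _ => add_nonneg) l hl

lemma sq_rpow_div_two {x : ℝ} (hx : 0 ≤ x) (p : ℝ) : (x ^ 2) ^ (p / 2) = x ^ p := by
  rw [← Real.rpow_natCast_mul hx]
  norm_num [mul_div_cancel₀]

lemma abs_intCast_le_sq (x : ℤ) : |(x : ℝ)| ≤ (x : ℝ) ^ 2 := by
  rw [← Int.cast_abs, Int.abs_eq_natAbs]
  exact_mod_cast Int.natAbs_le_self_sq x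

lemma abs_le_of_abs_mul_sq_le {ε x : ℤ} {A : ℝ} (hε : ε ≠ 0) (h : |(ε : ℝ) * x ^ 2| ≤ A) :
    |(x : ℝ)| ≤ A := by
  have hε1 : (1 : ℝ) ≤ |(ε : ℝ)| := by
    rw [← Int.cast_abs]
    exact_mod_cast Int.one_le_abs hε
  rw [abs_mul, abs_of_nonneg (sq_nonneg (x : ℝ))] at h
  nlinarith [abs_intCast_le_sq x, sq_nonneg (x : ℝ)]

lemma two_mul_abs_le_of_abs_sq_sub_sq_le {x y : ℤ} (hxy : x ≠ y) {A B : ℝ}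
    (h2 : |(x : ℝ) ^ 2 - y ^ 2| ≤ A) (h1 : |(x : ℝ) - y| ≤ B) : 2 * |(x : ℝ)| ≤ A + B := by
  have hsub : (1 : ℝ) ≤ |(x : ℝ) - y| := by
    rw [← Int.cast_sub, ← Int.cast_abs]
    exact_mod_cast Int.one_le_abs (sub_ne_zero.mpr hxy)
  have hadd : |(x : ℝ) + y| ≤ A :=
    calc |(x : ℝ) + y| ≤ |(x : ℝ) + y| * |(x : ℝ) - y| := le_mul_of_one_le_right (abs_nonneg _) hsub
      _ = |(x : ℝ) ^ 2 - y ^ 2| := by rw [← abs_mul]; ring_nf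
      _ ≤ A := h2
  calc 2 * |(x : ℝ)| = |((x : ℝ) + y) + (x - y)| := by rw [← abs_two, ← abs_mul]; ring_nf
    _ ≤ |(x : ℝ) + y| + |(x : ℝ) - y| := abs_add_le _ _
    _ ≤ A + B := add_le_add hadd h1

lemma abs_le_of_abs_moments_le_of_ne {x y ε η : ℤ} (hxy : x ≠ y) (hε0 : ε ≠ 0) (hε : |ε| ≤ 1)
    (hη : |η| ≤ 1) {A B : ℝ} (hB : 0 ≤ B)
    (h2 : |(ε : ℝ) * x ^ 2 + η * y ^ 2| ≤ A) (h1 : |(ε : ℝ) * x + η * y| ≤ B) :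
    |(x : ℝ)| ≤ A + B := by
  have hε1 : |(ε : ℝ)| = 1 := by
    rw [← Int.cast_abs]
    exact_mod_cast le_antisymm hε (Int.one_le_abs hε0)
  have hnorm (z : ℝ) : |(ε : ℝ) * z| = |z| := by rw [abs_mul, hε1, one_mul]
  have hεε : (ε : ℝ) * ε = 1 := by rw [← abs_mul_abs_self, hε1, one_mul]
  have hcases : η = -ε ∨ 0 ≤ ε * η := by
    have : ε = 1 ∨ ε = -1 := by rw [abs_le] at hε; omega
    rcases this with rfl | rfl <;> rw [abs_le] at hη <;> omega
  rcases hcases with rfl | hsame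
  · push_cast at h1 h2
    have h2' : |(x : ℝ) ^ 2 - y ^ 2| ≤ A := by
      rw [← hnorm]; convert h2 using 2; ring
    have h1' : |(x : ℝ) - y| ≤ B := by
      rw [← hnorm]; convert h1 using 2; ring
    linarith [two_mul_abs_le_of_abs_sq_sub_sq_le hxy h2' h1', abs_nonneg (x : ℝ),
      (abs_nonneg _).trans h2']
  · have hsame' : (0 : ℝ) ≤ ε * η := by exact_mod_cast hsame
    have hx : (x : ℝ) ^ 2 ≤ A :=
      calc (x : ℝ) ^ 2 ≤ (x : ℝ) ^ 2 + (ε : ℝ) * η * (y : ℝ) ^ 2 :=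
            le_add_of_nonneg_right (mul_nonneg hsame' (sq_nonneg _))
        _ = (ε : ℝ) * (ε * x ^ 2 + η * y ^ 2) := by linear_combination (-(x : ℝ) ^ 2) * hεε
        _ ≤ |(ε : ℝ) * (ε * x ^ 2 + η * y ^ 2)| := le_abs_self _
        _ ≤ A := (hnorm _).trans_le h2
    linarith [abs_intCast_le_sq x]

lemma abs_le_of_abs_moments_le {s : Finset ℤ} {t : List ℤ} {ρ : ℤ → ℤ} (ht : t.length ≤ 2)
    (hts : ∀ n ∈ t, n ∈ s) (hρ : ∀ n, |ρ n| ≤ t.count n) {A B : ℝ} (hB : 0 ≤ B)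
    (h2 : |∑ n ∈ s, (ρ n : ℝ) * n ^ 2| ≤ A) (h1 : |∑ n ∈ s, (ρ n : ℝ) * n| ≤ B)
    {a : ℤ} (ha : ρ a ≠ 0) : |(a : ℝ)| ≤ A + B := by
  have hmem (n : ℤ) (hn : ρ n ≠ 0) : n ∈ t :=
    List.count_pos_iff.mp (by exact_mod_cast (abs_pos.mpr hn).trans_le (hρ n))
  by_cases hsingle : ∀ b, b ≠ a → ρ b = 0
  · have hsum : ∑ n ∈ s, (ρ n : ℝ) * n ^ 2 = ρ a * a ^ 2 :=
      sum_eq_single_of_mem a (hts a (hmem a ha)) fun b _ hb => by simp [hsingle b hb]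
    rw [hsum] at h2
    exact (abs_le_of_abs_mul_sq_le ha h2).trans (le_add_of_nonneg_right hB)
  push Not at hsingle
  obtain ⟨b, hba, hb⟩ := hsingle
  have hperm : [a, b].Perm t :=
    (List.subperm_of_subset (by simpa using hba.symm)
      (by simp [List.cons_subset, hmem a ha, hmem b hb])).perm_of_length_le (by simpa using ht)
  have hsum (g : ℤ → ℝ) : ∑ n ∈ s, (ρ n : ℝ) * g n = ρ a * g a + ρ b * g b := by
    rw [← sum_pair (f := fun n => (ρ n : ℝ) * g n) hba.symm]
    refine (sum_subset ?_ fun n _ hn => ?_).symm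
    · simp [insert_subset_iff, hts a (hmem a ha), hts b (hmem b hb)]
    · have : ρ n = 0 := by
        by_contra h
        have := hperm.mem_iff.mpr (hmem n h)
        simp_all
      simp [this]
  have hca : |ρ a| ≤ 1 := by simpa [← hperm.count_eq, List.count_cons, hba.symm] using hρ a
  have hcb : |ρ b| ≤ 1 := by simpa [← hperm.count_eq, List.count_cons, hba, hba.symm] using hρ b
  rw [hsum] at h1 h2
  exact abs_le_of_abs_moments_le_of_ne hba.symm ha hca hcb hB h2 h1

lemma one_le_wR (n : ℤ) : 1 ≤ wR n := le_max_left _ _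

lemma wR_nonneg (n : ℤ) : 0 ≤ wR n := zero_le_one.trans (one_le_wR n)

lemma abs_le_wR (n : ℤ) : |(n : ℝ)| ≤ wR n := le_max_right _ _

lemma sq_le_wR_sq (n : ℤ) : (n : ℝ) ^ 2 ≤ wR n ^ 2 := by
  rw [← sq_abs]
  exact pow_le_pow_left₀ (abs_nonneg _) (abs_le_wR n) 2

lemma wR_le_wR_sq (n : ℤ) : wR n ≤ wR n ^ 2 := by nlinarith [one_le_wR n]

lemma one_le_mstarR (k k' : ℤ →₀ ℕ) : 1 ≤ mstarR k k' := by
  unfold mstarR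
  exact_mod_cast le_max_left 1 |momZ k k'|

lemma abs_momZ_le_mstarR (k k' : ℤ →₀ ℕ) : |(momZ k k' : ℝ)| ≤ mstarR k k' := by
  unfold mstarR
  rw [← Int.cast_abs]
  exact_mod_cast le_max_right 1 |momZ k k'|

section Splitting

variable {s : Finset ℤ} {t r : List ℤ} {ρ e : ℤ → ℤ}

lemma wR_le_of_abs_sum_le (ht : t.length ≤ 2) (hts : ∀ n ∈ t, n ∈ s) (hrs : ∀ n ∈ r, n ∈ s)
    (hρ : ∀ n, |ρ n| ≤ t.count n) (he : ∀ n, |e n| ≤ r.count n) {V : ℤ → ℝ}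
    (hV : ∀ n, |V n| ≤ 2) {M : ℝ} (hM : 1 ≤ M)
    (hmom : |∑ n ∈ s, ((ρ n : ℝ) + e n) * n| ≤ M)
    (hsmall : |∑ n ∈ s, ((ρ n : ℝ) + e n) * (n ^ 2 + V n)| ≤ 1) {a : ℤ} (ha : ρ a ≠ 0) :
    wR a ≤ 8 * ((r.map fun n => wR n ^ 2).sum + M ^ 2) := by
  set S := (r.map fun n => wR n ^ 2).sum
  have hS : 0 ≤ S := r.sum_map_nonneg_of_nonneg fun n => sq_nonneg _
  have herr (g : ℤ → ℝ) (hg : ∀ n, |g n| ≤ 3 * wR n ^ 2) : |∑ n ∈ s, (e n : ℝ) * g n| ≤ 3 * S :=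
    calc |∑ n ∈ s, (e n : ℝ) * g n| ≤ ∑ n ∈ s, |(e n : ℝ) * g n| := abs_sum_le_sum_abs _ _
      _ ≤ (r.map fun n => 3 * wR n ^ 2).sum :=
          sum_abs_mul_le_sum_map hrs he (fun n => by positivity) fun n _ => hg n
      _ = 3 * S := by rw [List.sum_map_mul_left]
  have hρV : |∑ n ∈ s, (ρ n : ℝ) * V n| ≤ 4 :=
    calc |∑ n ∈ s, (ρ n : ℝ) * V n| ≤ ∑ n ∈ s, |(ρ n : ℝ) * V n| := abs_sum_le_sum_abs _ _
      _ ≤ (t.map fun _ => (2 : ℝ)).sum :=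
          sum_abs_mul_le_sum_map hts hρ (fun _ => zero_le_two) fun n _ => hV n
      _ ≤ 4 := by
          have : (t.length : ℝ) ≤ 2 := by exact_mod_cast ht
          rw [List.map_const', List.sum_replicate, nsmul_eq_mul]
          linarith
  have h2 : |∑ n ∈ s, (ρ n : ℝ) * n ^ 2| ≤ 5 + 3 * S := by
    have hsplit : ∑ n ∈ s, (ρ n : ℝ) * n ^ 2 = ∑ n ∈ s, ((ρ n : ℝ) + e n) * (n ^ 2 + V n)
        - ∑ n ∈ s, (ρ n : ℝ) * V n - ∑ n ∈ s, (e n : ℝ) * (n ^ 2 + V n) := by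
      simp only [← sum_sub_distrib]
      exact sum_congr rfl fun n _ => by ring
    have hrest := herr (fun n => (n : ℝ) ^ 2 + V n) fun n =>
      (abs_add_le _ _).trans (by
        rw [abs_of_nonneg (sq_nonneg _)]
        nlinarith [sq_le_wR_sq n, hV n, one_le_wR n])
    rw [hsplit, abs_le]
    rw [abs_le] at hsmall hρV hrest
    constructor <;> linarith
  have h1 : |∑ n ∈ s, (ρ n : ℝ) * n| ≤ M + 3 * S := by
    have hsplit : ∑ n ∈ s, (ρ n : ℝ) * n
        = ∑ n ∈ s, ((ρ n : ℝ) + e n) * n - ∑ n ∈ s, (e n : ℝ) * n := by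
      rw [← sum_sub_distrib]
      exact sum_congr rfl fun n _ => by ring
    have hrest := herr (fun n => (n : ℝ)) fun n =>
      (abs_le_wR n).trans (by nlinarith [wR_le_wR_sq n, wR_nonneg n])
    rw [hsplit]
    exact (abs_sub _ _).trans (by linarith)
  have hA := abs_le_of_abs_moments_le ht hts hρ (by positivity) h2 h1 ha
  exact max_le (by nlinarith) (by nlinarith)

lemma sum_abs_mul_wR_rpow_le {θ : ℝ} (hθ : 0 ≤ θ) (ht : t.length ≤ 2) (hts : ∀ n ∈ t, n ∈ s)
    (hrs : ∀ n ∈ r, n ∈ s) (hρ : ∀ n, |ρ n| ≤ t.count n) (he : ∀ n, |e n| ≤ r.count n)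
    {C : ℝ} (hC : 0 ≤ C) (hwC : ∀ a, ρ a ≠ 0 → wR a ^ (θ / 2) ≤ C) :
    ∑ n ∈ s, |(ρ n : ℝ) + e n| * wR n ^ (θ / 2) ≤ 2 * C + (r.map fun n => wR n ^ θ).sum := by
  have hw (n : ℤ) : 0 ≤ wR n ^ (θ / 2) := Real.rpow_nonneg (wR_nonneg n) _
  calc ∑ n ∈ s, |(ρ n : ℝ) + e n| * wR n ^ (θ / 2)
      ≤ ∑ n ∈ s, (|(ρ n : ℝ) * wR n ^ (θ / 2)| + |(e n : ℝ) * wR n ^ (θ / 2)|) :=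
        sum_le_sum fun n _ => by
          rw [abs_mul, abs_mul, abs_of_nonneg (hw n), ← add_mul]
          exact mul_le_mul_of_nonneg_right (abs_add_le _ _) (hw n)
    _ = ∑ n ∈ s, |(ρ n : ℝ) * wR n ^ (θ / 2)| + ∑ n ∈ s, |(e n : ℝ) * wR n ^ (θ / 2)| :=
        sum_add_distrib
    _ ≤ (t.map fun _ => C).sum + (r.map fun n => wR n ^ θ).sum := by
        gcongr
        · exact sum_abs_mul_le_sum_map hts hρ (fun _ => hC) fun n hn => by
            rw [abs_of_nonneg (hw n)]; exact hwC n hn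
        · exact sum_abs_mul_le_sum_map hrs he (fun n => Real.rpow_nonneg (wR_nonneg n) _)
            fun n _ => by
              rw [abs_of_nonneg (hw n)]
              exact Real.rpow_le_rpow_of_exponent_le (one_le_wR n) (by linarith)
    _ ≤ 2 * C + (r.map fun n => wR n ^ θ).sum := by
        rw [List.map_const', List.sum_replicate, nsmul_eq_mul]
        gcongr
        exact_mod_cast ht

end Splitting

lemma two_mul_rpow_add_le {θ : ℝ} (hθ0 : 0 < θ) (hθ2 : θ ≤ 2) (r : List ℤ) {M : ℝ} (hM : 0 ≤ M) :
    2 * (8 * ((r.map fun n => wR n ^ 2).sum + M ^ 2)) ^ (θ / 2) + (r.map fun n => wR n ^ θ).sum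
      ≤ 3 * 8 ^ (θ / 2) * ((r.map fun n => wR n ^ θ).sum + M ^ θ) := by
  set S := (r.map fun n => wR n ^ 2).sum
  set T := (r.map fun n => wR n ^ θ).sum
  have hnonneg : ∀ x ∈ r.map (fun n => wR n ^ 2), 0 ≤ x := by
    simp only [List.mem_map]; rintro _ ⟨n, _, rfl⟩; positivity
  have hS : 0 ≤ S := List.sum_nonneg hnonneg
  have hT : 0 ≤ T := r.sum_map_nonneg_of_nonneg fun n => Real.rpow_nonneg (wR_nonneg n) _
  have hST : S ^ (θ / 2) ≤ T := by
    refine (rpow_list_sum_le_sum_map_rpow (by linarith) (by linarith) hnonneg).trans_eq ?_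
    simp only [List.map_map]
    exact congrArg List.sum (List.map_congr_left fun n _ => sq_rpow_div_two (wR_nonneg n) θ)
  have hsub : (S + M ^ 2) ^ (θ / 2) ≤ T + M ^ θ := by
    refine (Real.rpow_add_le_add_rpow hS (sq_nonneg M) (by linarith) (by linarith)).trans ?_
    rw [sq_rpow_div_two hM]
    linarith
  have h8 : (1 : ℝ) ≤ 8 ^ (θ / 2) := Real.one_le_rpow (by norm_num) (by linarith)
  have hMθ : 0 ≤ M ^ θ := Real.rpow_nonneg hM θ
  rw [Real.mul_rpow (by norm_num) (by positivity)]
  nlinarith [mul_le_mul_of_nonneg_left hsub (by linarith : (0 : ℝ) ≤ 8 ^ (θ / 2))]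

lemma count_eq_add_of_coe_eq_bind {α : Type*} [DecidableEq α] {k k' : α →₀ ℕ} {L : List α}
    (hL : (↑L : Multiset α) = (k.support ∪ k'.support).val.bind
        fun n => Multiset.replicate (k n + k' n) n) (n : α) :
    L.count n = k n + k' n := by
  rw [← Multiset.coe_count, hL, Multiset.count_finset_bind_replicate]
  split_ifs with h
  · rfl
  · simp only [mem_union, Finsupp.mem_support_iff, not_or, not_not] at h
    simp [h.1, h.2]

theorem stmt4_general (θ : ℝ) (hθ : θ ∈ Set.Ioo (0:ℝ) 1) (k k' : ℤ →₀ ℕ)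
    (V : ℤ → ℝ) (hV : ∀ n : ℤ, |V n| ≤ 2)
    -- `L` is an arrangement of the multiset in which each `n` is repeated `kₙ + k'ₙ` times,
    -- ordered so that `w(n₁) ≥ w(n₂) ≥ ⋯`
    (L : List ℤ)
    (hL : (↑L : Multiset ℤ) = (k.support ∪ k'.support).val.bind
        (fun n => Multiset.replicate (k n + k' n) n))
    (hsmall : |∑ n ∈ k.support ∪ k'.support,
        ((k n : ℝ) - (k' n : ℝ)) * ((n : ℝ) ^ 2 + V n)| ≤ 1) :
    (∑ n ∈ k.support ∪ k'.support, |(k n : ℝ) - (k' n : ℝ)| * wR n ^ (θ / 2))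
      ≤ 3 * 8 ^ (θ / 2) *
        (((L.drop 2).map (fun n => wR n ^ θ)).sum + mstarR k k' ^ θ) := by
  obtain ⟨hθ0, hθ1⟩ := hθ
  have hcount := count_eq_add_of_coe_eq_bind hL
  have hLs (n : ℤ) (hn : n ∈ L) : n ∈ k.support ∪ k'.support := by
    have := List.count_pos_iff.mpr hn
    rw [hcount] at this
    simp only [mem_union, Finsupp.mem_support_iff]
    omega
  set t := L.take 2
  set r := L.drop 2
  have hsplit (n : ℤ) : |(k n : ℤ) - k' n| ≤ t.count n + r.count n := by
    rw [← Nat.cast_add, ← List.count_append, List.take_append_drop, hcount, Nat.cast_add, abs_le]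
    omega
  choose ρ e hρe hρ he using fun n =>
    Int.exists_add_eq_abs_le_abs_le (hsplit n) (Nat.cast_nonneg _) (Nat.cast_nonneg _)
  have hcast (n : ℤ) : (k n : ℝ) - k' n = ρ n + e n := by exact_mod_cast hρe n
  have hmom : (momZ k k' : ℝ) = ∑ n ∈ k.support ∪ k'.support, ((ρ n : ℝ) + e n) * n := by
    simp [momZ, ← hcast]
  simp only [hcast] at hsmall ⊢
  have hts (n : ℤ) (hn : n ∈ t) := hLs n (List.mem_of_mem_take hn)
  have hrs (n : ℤ) (hn : n ∈ r) := hLs n (List.mem_of_mem_drop hn)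
  have ht : t.length ≤ 2 := List.length_take_le 2 L
  have hM := one_le_mstarR k k'
  have hC : 0 ≤ 8 * ((r.map fun n => wR n ^ 2).sum + mstarR k k' ^ 2) :=
    mul_nonneg (by norm_num) (add_nonneg (r.sum_map_nonneg_of_nonneg fun n => sq_nonneg _)
      (sq_nonneg _))
  have hwa (a : ℤ) (ha : ρ a ≠ 0) := wR_le_of_abs_sum_le ht hts hrs hρ he hV hM
    (hmom ▸ abs_momZ_le_mstarR k k') hsmall ha
  calc _ ≤ _ := sum_abs_mul_wR_rpow_le hθ0.le ht hts hrs hρ he (Real.rpow_nonneg hC _)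
        fun a ha => Real.rpow_le_rpow (wR_nonneg a) (hwa a ha) (by linarith)
    _ ≤ _ := two_mul_rpow_add_le hθ0 (by linarith) r (by linarith)

theorem stmt4 (θ : ℝ) (hθ : θ ∈ Set.Ioo (0:ℝ) 1) (k k' : ℤ →₀ ℕ)
    (V : ℤ → ℝ) (hV : ∀ n : ℤ, |V n| ≤ 2)
    -- `L` is an arrangement of the multiset in which each `n` is repeated `kₙ + k'ₙ` times,
    -- ordered so that `w(n₁) ≥ w(n₂) ≥ ⋯`
    (L : List ℤ) (hsort : (L.map wR).Pairwise (· ≥ ·))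
    (hL : (↑L : Multiset ℤ) = (k.support ∪ k'.support).val.bind
        (fun n => Multiset.replicate (k n + k' n) n))
    (hsmall : |∑ n ∈ k.support ∪ k'.support,
        ((k n : ℝ) - (k' n : ℝ)) * ((n : ℝ) ^ 2 + V n)| ≤ 1) :
    (∑ n ∈ k.support ∪ k'.support, |(k n : ℝ) - (k' n : ℝ)| * wR n ^ (θ / 2))
      ≤ 3 * 8 ^ (θ / 2) *
        (((L.drop 2).map (fun n => wR n ^ θ)).sum + mstarR k k' ^ θ) :=
  stmt4_general θ hθ k k' V hV L hL hsmall
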